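/- arXiv:2204.08275 — 3 statements merged into one kernel-verified Lean document; each statement's English description precedes it below -/
import Mathlib

section
/- ∑_{k=0}^∞ (49k + 1)·8^k/(3^k · C(3k,k)) = 81 + 16√3·π. -/
/-!
Euler's Beta integral gives `∫₀¹ xᵏ (1 - x)²ᵏ dx = 1 / ((3k + 1) C(3k, k))`, so the `k`-th term is
`(49k + 1)(3k + 1) ∫₀¹ u(x)ᵏ dx` with `u(x) = 8x(1 - x)² / 3 ∈ [0, 32/81]`. The series may then be
summed under the integral sign, leaving `∫₀¹ G(u(x)) dx` for the rational function
`G(u) = ∑ (49k + 1)(3k + 1) uᵏ = 294 / (1 - u)³ - 389 / (1 - u)² + 96 / (1 - u)`.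
As `1 - u = (3 - 2x)(4x² - 2x + 1) / 3`, partial fractions give an elementary antiderivative: its
rational part contributes `81` and its arctangent part `32√3 (arctan √3 + arctan (1/√3)) = 16√3π`.
-/

open Real MeasureTheory intervalIntegral Nat

theorem integral_pow_mul_one_sub_pow (a b : ℕ) :
    ∫ x in (0 : ℝ)..1, x ^ a * (1 - x) ^ b = 1 / ((a + b + 1) * (a + b).choose a) := by
  have hbeta := Complex.Gamma_mul_Gamma_eq_betaIntegral (s := a + 1) (t := b + 1)
    (by simp; positivity) (by simp; positivity)
  have hadd : (a + 1 : ℂ) + (b + 1) = ((a + b + 1 : ℕ) : ℂ) + 1 := by push_cast; ring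
  rw [hadd, Complex.Gamma_nat_eq_factorial, Complex.Gamma_nat_eq_factorial,
    Complex.Gamma_nat_eq_factorial, Complex.betaIntegral] at hbeta
  have hreal : ∫ x in (0 : ℝ)..1, (x : ℂ) ^ ((a : ℂ) + 1 - 1) * (1 - (x : ℂ)) ^ ((b : ℂ) + 1 - 1)
      = ((∫ x in (0 : ℝ)..1, x ^ a * (1 - x) ^ b : ℝ) : ℂ) := by
    rw [← integral_ofReal]
    refine integral_congr fun x _ => ?_
    simp only [add_sub_cancel_right, Complex.cpow_natCast]
    push_cast
    rfl
  have hchoose : ((a + b).choose a * a ! * b ! : ℕ) = (a + b)! := by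
    rw [add_comm a b, mul_right_comm]; exact add_choose_mul_factorial_mul_factorial b a
  have hfac : ((a + b + 1)! : ℂ) = (a + b + 1) * ((a + b).choose a * a ! * b !) := by
    rw [factorial_succ, ← hchoose]; push_cast; ring
  rw [hreal, hfac] at hbeta
  have hfac_ne : (a ! * b ! : ℂ) ≠ 0 := by
    exact_mod_cast (mul_pos (factorial_pos a) (factorial_pos b)).ne'
  have hden : ((a + b + 1) * (a + b).choose a : ℂ) ≠ 0 := by
    exact_mod_cast (mul_pos (succ_pos (a + b)) (choose_pos (le_add_right a b))).ne'
  apply_fun ((↑) : ℝ → ℂ) using Complex.ofReal_injective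
  push_cast
  rw [eq_div_iff hden, ← mul_right_inj' hfac_ne]
  linear_combination -hbeta

theorem term_eq_integral (k : ℕ) :
    (49 * (k : ℝ) + 1) * 8 ^ k / (3 ^ k * ((3 * k).choose k : ℝ)) =
      ∫ x in (0 : ℝ)..1, (49 * (k : ℝ) + 1) * (3 * k + 1) * (8 * x * (1 - x) ^ 2 / 3) ^ k := by
  have hpow (x : ℝ) : (49 * (k : ℝ) + 1) * (3 * k + 1) * (8 * x * (1 - x) ^ 2 / 3) ^ k =
      (49 * k + 1) * (3 * k + 1) * (8 / 3) ^ k * (x ^ k * (1 - x) ^ (2 * k)) := by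
    rw [pow_mul, ← mul_pow, mul_assoc _ ((8 / 3 : ℝ) ^ k), ← mul_pow]
    congr 2
    ring
  simp_rw [hpow, intervalIntegral.integral_const_mul, integral_pow_mul_one_sub_pow]
  have hchoose : ((3 * k).choose k : ℝ) ≠ 0 := by
    exact_mod_cast (choose_pos (by omega : k ≤ 3 * k)).ne'
  rw [show k + 2 * k = 3 * k by ring, div_pow]
  push_cast
  field_simp
  ring

theorem abs_eight_mul_mul_one_sub_sq_div_three_le {x : ℝ} (hx : x ∈ Set.uIcc 0 1) :
    |8 * x * (1 - x) ^ 2 / 3| ≤ 32 / 81 := by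
  rw [Set.uIcc_of_le zero_le_one] at hx
  obtain ⟨hx0, hx1⟩ := hx
  rw [abs_of_nonneg (by positivity)]
  nlinarith [mul_nonneg (sq_nonneg (3 * x - 1)) (by linarith : (0 : ℝ) ≤ 4 - 3 * x)]

noncomputable def quadGeomSum (u : ℝ) : ℝ := 294 / (1 - u) ^ 3 - 389 / (1 - u) ^ 2 + 96 / (1 - u)

-- `(49k + 1)(3k + 1) = 294 C(k + 2, 2) - 389 C(k + 1, 1) + 96 C(k, 0)`
theorem hasSum_quadGeomSum {u : ℝ} (hu : |u| < 1) :
    HasSum (fun k : ℕ => (49 * (k : ℝ) + 1) * (3 * k + 1) * u ^ k) (quadGeomSum u) := by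
  rw [← Real.norm_eq_abs] at hu
  have h2 := (hasSum_choose_mul_geometric_of_norm_lt_one 2 hu).mul_left 294
  have h1 := (hasSum_choose_mul_geometric_of_norm_lt_one 1 hu).mul_left 389
  have h0 := (hasSum_choose_mul_geometric_of_norm_lt_one 0 hu).mul_left 96
  rw [show quadGeomSum u =
    294 * (1 / (1 - u) ^ (2 + 1)) - 389 * (1 / (1 - u) ^ (1 + 1)) + 96 * (1 / (1 - u) ^ (0 + 1))
    by rw [quadGeomSum]; ring]
  refine ((h2.sub h1).add h0).congr_fun fun k => ?_
  rw [cast_choose_two, choose_one_right, choose_zero_right]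
  push_cast
  ring

theorem ContinuousOn.quadGeomSum {f : ℝ → ℝ} {s : Set ℝ} (hf : ContinuousOn f s)
    (h : ∀ x ∈ s, f x ≠ 1) : ContinuousOn (fun x => quadGeomSum (f x)) s := by
  have hne (x) (hx : x ∈ s) : 1 - f x ≠ 0 := sub_ne_zero.2 (h x hx).symm
  unfold _root_.quadGeomSum
  fun_prop (disch := simp_all)

theorem tsum_intervalIntegral_mul_pow {a b r : ℝ} {c : ℕ → ℝ} {g : ℝ → ℝ} (hg : Continuous g)
    (hgr : ∀ x ∈ Set.uIcc a b, |g x| ≤ r) (hc : Summable fun k => |c k| * r ^ k) :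
    ∑' k, ∫ x in a..b, c k * g x ^ k = ∫ x in a..b, ∑' k, c k * g x ^ k := by
  let f : ℕ → C(ℝ, ℝ) := fun k => ⟨fun x => c k * g x ^ k, by fun_prop⟩
  refine tsum_intervalIntegral_eq_of_summable_norm (f := f)
    (hc.of_nonneg_of_le (fun _ => norm_nonneg _) fun k => ?_)
  have hr : 0 ≤ r := (abs_nonneg _).trans (hgr a Set.left_mem_uIcc)
  refine (ContinuousMap.norm_le _ (by positivity)).2 fun x => ?_
  simp only [ContinuousMap.restrict_apply, ContinuousMap.coe_mk, f, norm_mul, norm_pow,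
    Real.norm_eq_abs]
  gcongr
  exact hgr x x.2

theorem four_mul_sq_sub_two_mul_add_one_pos (x : ℝ) : 0 < 4 * x ^ 2 - 2 * x + 1 := by
  nlinarith [sq_nonneg (4 * x - 1)]

theorem hasDerivAt_arctan_term (x : ℝ) :
    HasDerivAt (fun x => 32 * √3 * arctan ((4 * x - 1) / √3))
      (96 / (4 * x ^ 2 - 2 * x + 1)) x := by
  have hlin : HasDerivAt (fun x : ℝ => (4 * x - 1) / √3) (4 / √3) x := by
    simpa using (((hasDerivAt_id x).const_mul 4).sub_const 1).div_const √3
  refine (((hasDerivAt_arctan _).comp x hlin).const_mul (32 * √3)).congr_deriv ?_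
  have hq := (four_mul_sq_sub_two_mul_add_one_pos x).ne'
  have hs : √3 ≠ 0 := by positivity
  rw [div_pow, sq_sqrt zero_le_three, eq_div_iff hq]
  field_simp
  ring

noncomputable def primitive (x : ℝ) : ℝ :=
  (1536 * x ^ 5 - 4608 * x ^ 4 + 4608 * x ^ 3 - 2544 * x ^ 2 + 1737 * x - 486) /
      ((3 - 2 * x) ^ 2 * (4 * x ^ 2 - 2 * x + 1) ^ 2) + 32 * √3 * arctan ((4 * x - 1) / √3)

theorem hasDerivAt_primitive {x : ℝ} (hx : 3 - 2 * x ≠ 0) :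
    HasDerivAt primitive (quadGeomSum (8 * x * (1 - x) ^ 2 / 3)) x := by
  have hq := (four_mul_sq_sub_two_mul_add_one_pos x).ne'
  have hnum : HasDerivAt
      (fun x : ℝ => 1536 * x ^ 5 - 4608 * x ^ 4 + 4608 * x ^ 3 - 2544 * x ^ 2 + 1737 * x - 486)
      (7680 * x ^ 4 - 18432 * x ^ 3 + 13824 * x ^ 2 - 5088 * x + 1737) x := by
    refine (((((((hasDerivAt_pow 5 x).const_mul 1536).sub ((hasDerivAt_pow 4 x).const_mul 4608)).add
      ((hasDerivAt_pow 3 x).const_mul 4608)).sub ((hasDerivAt_pow 2 x).const_mul 2544)).add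
      ((hasDerivAt_id x).const_mul 1737)).sub_const 486).congr_deriv ?_
    norm_num
    ring
  have hlin : HasDerivAt (fun x : ℝ => 3 - 2 * x) (-2) x := by
    simpa using ((hasDerivAt_id x).const_mul 2).const_sub 3
  have hquad : HasDerivAt (fun x : ℝ => 4 * x ^ 2 - 2 * x + 1) (8 * x - 2) x := by
    refine ((((hasDerivAt_pow 2 x).const_mul 4).sub ((hasDerivAt_id x).const_mul 2)).add_const
      1).congr_deriv ?_
    norm_num
    ring
  have hden : HasDerivAt (fun x : ℝ => (3 - 2 * x) ^ 2 * (4 * x ^ 2 - 2 * x + 1) ^ 2)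
      (2 * (3 - 2 * x) * (-2) * (4 * x ^ 2 - 2 * x + 1) ^ 2
        + (3 - 2 * x) ^ 2 * (2 * (4 * x ^ 2 - 2 * x + 1) * (8 * x - 2))) x := by
    refine ((hlin.fun_pow 2).mul (hquad.fun_pow 2)).congr_deriv ?_
    push_cast
    ring
  refine ((hnum.div hden (mul_ne_zero (pow_ne_zero 2 hx) (pow_ne_zero 2 hq))).add
    (hasDerivAt_arctan_term x)).congr_deriv ?_
  rw [quadGeomSum,
    show 1 - 8 * x * (1 - x) ^ 2 / 3 = (3 - 2 * x) * (4 * x ^ 2 - 2 * x + 1) / 3 by ring]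
  -- the two factors as `field_simp` normalises them
  have hx' : 3 - x * 2 ≠ 0 := by rwa [mul_comm]
  have hq' : x * (x * 4 - 2) + 1 ≠ 0 := by convert hq using 1; ring
  field_simp
  ring

theorem primitive_one_sub_primitive_zero : primitive 1 - primitive 0 = 81 + 16 * √3 * π := by
  have h1 : (4 * 1 - 1) / √3 = √3 := by
    rw [div_eq_iff (by positivity)]; norm_num
  have h0 : (4 * 0 - 1) / √3 = -(√3)⁻¹ := by ring
  simp only [primitive, h1, h0, arctan_neg, arctan_sqrt_three, arctan_inv_sqrt_three]
  norm_num
  ring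

theorem stmt_4 :
    ∑' k : ℕ, (49 * (k : ℝ) + 1) * 8 ^ k / (3 ^ k * (Nat.choose (3 * k) k : ℝ)) =
      81 + 16 * Real.sqrt 3 * Real.pi := by
  have habs_lt_one {x : ℝ} (hx : x ∈ Set.uIcc 0 1) : |8 * x * (1 - x) ^ 2 / 3| < 1 :=
    (abs_eight_mul_mul_one_sub_sq_div_three_le hx).trans_lt (by norm_num)
  have hsummable : Summable fun k : ℕ => |(49 * (k : ℝ) + 1) * (3 * k + 1)| * (32 / 81) ^ k :=
    (hasSum_quadGeomSum (u := 32 / 81) (by norm_num [abs_of_pos])).summable.congr fun k => by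
      rw [abs_of_nonneg (by positivity)]
  have hcont : ContinuousOn (fun x : ℝ => quadGeomSum (8 * x * (1 - x) ^ 2 / 3)) (Set.uIcc 0 1) :=
    (by fun_prop : Continuous _).continuousOn.quadGeomSum fun x hx =>
      ((le_abs_self _).trans_lt (habs_lt_one hx)).ne
  calc _ = ∑' k : ℕ, ∫ x in (0 : ℝ)..1,
        (49 * (k : ℝ) + 1) * (3 * k + 1) * (8 * x * (1 - x) ^ 2 / 3) ^ k :=
        tsum_congr term_eq_integral
    _ = ∫ x in (0 : ℝ)..1, ∑' k : ℕ,
        (49 * (k : ℝ) + 1) * (3 * k + 1) * (8 * x * (1 - x) ^ 2 / 3) ^ k :=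
        tsum_intervalIntegral_mul_pow (by fun_prop)
          (fun _ hx => abs_eight_mul_mul_one_sub_sq_div_three_le hx) hsummable
    _ = ∫ x in (0 : ℝ)..1, quadGeomSum (8 * x * (1 - x) ^ 2 / 3) :=
        integral_congr fun x hx => (hasSum_quadGeomSum (habs_lt_one hx)).tsum_eq
    _ = primitive 1 - primitive 0 := by
        refine integral_eq_sub_of_hasDerivAt (fun x hx => hasDerivAt_primitive ?_)
          hcont.intervalIntegrable
        rw [Set.uIcc_of_le zero_le_one] at hx
        linarith [hx.2]
    _ = 81 + 16 * √3 * π := primitive_one_sub_primitive_zero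
end

section
/- Let c = (3/2)·((1+√2)^{1/3} − (1+√2)^{−1/3}). For every real x with −3 < x < c, ∑_{k=0}^∞ (s(x)·k + t(x))·x^{3k}/((x−1)^k · C(3k,k)) = 12x²(1−x)·log(1−x) − 27(1−x)(x² − 6x + 3), where s(x) = (x+3)(2x−3)²(x²−12x+9) and t(x) = 2x⁵ − 48x⁴ + 69x³ − 189x² + 243x − 81. -/
/-!
By the Beta integral, `1 / ((3k+1) C(3k,k)) = ∫₀¹ tᵏ (1-t)²ᵏ dt`, so the series equals
`∫₀¹ ∑ₖ (s k + t)(3k+1) z(t)ᵏ dt` with `z(t) = x³ t (1-t)² / (x-1)`. Since `t (1-t)² ≤ 4/27`,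
the hypothesis `|x³/(x-1)| < 27/4` gives `|z(t)| < 1` uniformly, which justifies the
interchange, and the inner sum is a rational function of `z`. As
`(x-1)(1 - z(t)) = (x t + 1 - x)(-1 + (x²+x) t - x² t²)` factors, the integrand has an
elementary antiderivative: a rational function plus logarithms of the two factors.
-/

open Real intervalIntegral Nat
open scoped Interval

theorem integral_pow_mul_one_sub_pow_s7 (m n : ℕ) :
    ∫ t in (0 : ℝ)..1, t ^ m * (1 - t) ^ n = (m ! * n ! : ℝ) / (m + n + 1)! := by
  induction n generalizing m with
  | zero =>
    rw [integral_congr (g := fun t : ℝ => t ^ m) (fun t _ => by simp), integral_pow,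
      Nat.add_zero, Nat.factorial_succ]
    push_cast
    field_simp
    simp
  | succ n ih =>
    have hu : ∀ t ∈ Set.uIcc (0 : ℝ) 1,
        HasDerivAt (fun t : ℝ => (1 - t) ^ (n + 1)) (-((n + 1) * (1 - t) ^ n)) t := fun t _ => by
      simpa using ((hasDerivAt_id t).const_sub 1).fun_pow (n + 1)
    have hv : ∀ t ∈ Set.uIcc (0 : ℝ) 1,
        HasDerivAt (fun t : ℝ => t ^ (m + 1) / (m + 1)) (t ^ m) t := fun t _ => by
      refine ((hasDerivAt_pow (m + 1) t).div_const _).congr_deriv ?_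
      push_cast
      field_simp
    have hparts := integral_mul_deriv_eq_deriv_mul hu hv
      ((by fun_prop : Continuous _).intervalIntegrable _ _)
      ((continuous_pow m).intervalIntegrable _ _)
    simp only [one_pow, sub_self, ne_eq, add_eq_zero, one_ne_zero, and_false, not_false_eq_true,
      zero_pow, zero_div, mul_zero, zero_mul, sub_zero, neg_mul, integral_neg, zero_sub,
      neg_neg] at hparts
    rw [integral_congr (g := fun t : ℝ => (1 - t) ^ (n + 1) * t ^ m) (fun t _ => mul_comm _ _),
      hparts, integral_congr (g := fun t : ℝ => (n + 1) / (m + 1) * (t ^ (m + 1) * (1 - t) ^ n))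
        (fun t _ => by simp only; ring), integral_const_mul, ih (m + 1),
      show m + 1 + n + 1 = m + (n + 1) + 1 by ring, Nat.factorial_succ m, Nat.factorial_succ n]
    push_cast
    field_simp

theorem integral_pow_mul_one_sub_pow_two_mul (k : ℕ) :
    ∫ t in (0 : ℝ)..1, t ^ k * (1 - t) ^ (2 * k)
      = ((3 * k + 1) * (3 * k).choose k : ℝ)⁻¹ := by
  have hfac := Nat.choose_mul_factorial_mul_factorial (show k ≤ 3 * k by omega)
  rw [show 3 * k - k = 2 * k by omega] at hfac
  rw [integral_pow_mul_one_sub_pow_s7, show k + 2 * k + 1 = 3 * k + 1 by ring, Nat.factorial_succ,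
    ← hfac]
  push_cast
  field_simp

def genFun {𝕜 : Type*} [Field 𝕜] (s b z : 𝕜) : 𝕜 :=
  6 * s / (1 - z) ^ 3 + (3 * b - 8 * s) / (1 - z) ^ 2 + 2 * (s - b) / (1 - z)

theorem hasSum_genFun {𝕜 : Type*} [NormedField 𝕜] [HasSummableGeomSeries 𝕜] (s b : 𝕜)
    {z : 𝕜} (hz : ‖z‖ < 1) :
    HasSum (fun k : ℕ => (s * k + b) * (3 * k + 1) * z ^ k) (genFun s b z) := by
  have h2 := (hasSum_choose_mul_geometric_of_norm_lt_one 2 hz).mul_left (6 * s)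
  have h1 := (hasSum_choose_mul_geometric_of_norm_lt_one 1 hz).mul_left (3 * b - 8 * s)
  have h0 := (hasSum_geometric_of_norm_lt_one hz).mul_left (2 * (s - b))
  have hval : genFun s b z = 6 * s * (1 / (1 - z) ^ (2 + 1))
      + (3 * b - 8 * s) * (1 / (1 - z) ^ (1 + 1)) + 2 * (s - b) * (1 - z)⁻¹ := by
    simp only [genFun]
    ring
  rw [hval]
  refine ((h2.add h1).add h0).congr_fun fun k => ?_
  have hC : ((k + 2).choose 2 : 𝕜) * 2 = (k + 2) * (k + 1) := by
    have h : (k + 2).choose 2 * 2 = (k + 2) * (k + 1) := by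
      simpa using (Nat.add_one_mul_choose_eq (k + 1) 1).symm
    simpa using congrArg (Nat.cast (R := 𝕜)) h
  simp only [Nat.choose_one_right]
  push_cast
  linear_combination (-3 * s * z ^ k) * hC

theorem mul_one_sub_sq_mem_Icc {t : ℝ} (ht : t ∈ Set.Icc (0 : ℝ) 1) :
    t * (1 - t) ^ 2 ∈ Set.Icc (0 : ℝ) (4 / 27) := by
  obtain ⟨h0, h1⟩ := ht
  constructor
  · positivity
  · nlinarith [mul_nonneg (sq_nonneg (3 * t - 1)) (by linarith : (0 : ℝ) ≤ 4 - 3 * t)]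

theorem abs_mul_mul_one_sub_sq_le {r t : ℝ} (ht : t ∈ Set.Icc (0 : ℝ) 1) :
    |r * (t * (1 - t) ^ 2)| ≤ |r| * (4 / 27) := by
  obtain ⟨h0, h1⟩ := mul_one_sub_sq_mem_Icc ht
  rw [abs_mul, abs_of_nonneg h0]
  exact mul_le_mul_of_nonneg_left h1 (abs_nonneg r)

theorem abs_mul_mul_one_sub_sq_lt_one {r t : ℝ} (hr : |r| < 27 / 4)
    (ht : t ∈ Set.Icc (0 : ℝ) 1) : |r * (t * (1 - t) ^ 2)| < 1 :=
  (abs_mul_mul_one_sub_sq_le ht).trans_lt (by linarith)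

theorem hasSum_div_choose_three_mul (s b : ℝ) {r : ℝ} (hr : |r| < 27 / 4) :
    HasSum (fun k : ℕ => (s * k + b) * r ^ k / (3 * k).choose k)
      (∫ t in (0 : ℝ)..1, genFun s b (r * (t * (1 - t) ^ 2))) := by
  set q := |r| * (4 / 27) with hq_def
  have hq : ‖q‖ < 1 := by
    rw [Real.norm_eq_abs, abs_of_nonneg (by positivity), hq_def]
    linarith
  have hIoc : ∀ t ∈ Ι (0 : ℝ) 1, t ∈ Set.Icc (0 : ℝ) 1 := fun t ht =>
    Set.Ioc_subset_Icc_self (by simpa using ht)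
  have hdom := hasSum_integral_of_dominated_convergence (μ := MeasureTheory.volume)
    (F := fun (k : ℕ) (t : ℝ) => (s * k + b) * (3 * k + 1) * (r * (t * (1 - t) ^ 2)) ^ k)
    (fun (k : ℕ) _ => (|s| * k + |b|) * (3 * k + 1) * q ^ k)
    (fun k => (by fun_prop : Continuous _).aestronglyMeasurable)
    (fun k => .of_forall fun t ht => by
      rw [norm_mul, norm_mul, norm_pow]
      gcongr
      · simpa [abs_mul] using norm_add_le (s * k) b
      · exact (Real.norm_of_nonneg (by positivity)).le
      · exact abs_mul_mul_one_sub_sq_le (hIoc t ht))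
    (.of_forall fun t _ => (hasSum_genFun |s| |b| hq).summable)
    intervalIntegrable_const
    (.of_forall fun t ht => hasSum_genFun s b (abs_mul_mul_one_sub_sq_lt_one hr (hIoc t ht)))
  refine hdom.congr_fun fun k => ?_
  have hC : ((3 * k).choose k : ℝ) ≠ 0 := by
    exact_mod_cast (Nat.choose_pos (by omega : k ≤ 3 * k)).ne'
  simp only [mul_pow, ← pow_mul, integral_const_mul, integral_pow_mul_one_sub_pow_two_mul]
  field_simp

theorem intervalIntegrable_genFun (s b : ℝ) {r : ℝ} (hr : |r| < 27 / 4) :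
    IntervalIntegrable (fun t => genFun s b (r * (t * (1 - t) ^ 2))) MeasureTheory.volume 0 1 := by
  refine ContinuousOn.intervalIntegrable fun t ht => ContinuousAt.continuousWithinAt ?_
  rw [Set.uIcc_of_le zero_le_one] at ht
  have h : 1 - r * (t * (1 - t) ^ 2) ≠ 0 :=
    sub_ne_zero.2 (abs_lt.1 (abs_mul_mul_one_sub_sq_lt_one hr ht)).2.ne'
  unfold genFun
  fun_prop (disch := simp [h])

theorem four_mul_cube_add_lt_of_lt {x : ℝ}
    (hx : x < (3 / 2) * ((1 + √2) ^ ((1 : ℝ) / 3) - (1 + √2) ^ (-(1 : ℝ) / 3))) :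
    4 * x ^ 3 + 27 * x < 27 := by
  have hρ : (0 : ℝ) < 1 + √2 := by positivity
  set r := (1 + √2) ^ ((1 : ℝ) / 3) with hr_def
  have hr : r * r⁻¹ = 1 := mul_inv_cancel₀ (by positivity)
  have hr3 : r ^ 3 = 1 + √2 := by
    rw [hr_def, ← Real.rpow_natCast, ← Real.rpow_mul hρ.le]
    norm_num
  have hinv3 : r⁻¹ ^ 3 = √2 - 1 := by
    rw [inv_pow, hr3]
    refine inv_eq_of_mul_eq_one_right ?_
    ring_nf
    norm_num
  have hinv : (1 + √2) ^ (-(1 : ℝ) / 3) = r⁻¹ := by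
    rw [hr_def, ← Real.rpow_neg hρ.le, neg_div]
  rw [hinv] at hx
  set c := 3 / 2 * (r - r⁻¹)
  -- Cardano: `c` is the real root of `4 c³ + 27 c = 27`.
  have hc : 4 * c ^ 3 + 27 * c = 27 := by
    linear_combination (27 / 2) * hr3 - (27 / 2) * hinv3 - (81 / 2) * (r - r⁻¹) * hr
  nlinarith [sq_nonneg (x + c), sq_nonneg x, sq_nonneg c]

theorem abs_cube_div_sub_one_lt {x : ℝ} (hx₁ : -3 < x) (hx₂ : 4 * x ^ 3 + 27 * x < 27) :
    |x ^ 3 / (x - 1)| < 27 / 4 := by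
  have hx : x < 1 := by nlinarith [sq_nonneg x]
  rw [abs_div, abs_of_neg (by linarith : x - 1 < 0), div_lt_iff₀ (by linarith)]
  rcases le_or_gt x 0 with h | h
  · rw [abs_of_nonpos (by nlinarith [sq_nonneg x] : x ^ 3 ≤ 0)]
    have h3 : 0 < (2 * x - 3) ^ 2 := by nlinarith
    -- `4 x³ - 27 x + 27 = (x + 3)(2 x - 3)²`
    nlinarith [mul_pos (by linarith : 0 < x + 3) h3]
  · rw [abs_of_pos (by positivity)]
    linarith

section Antiderivative

open Polynomial

variable (x : ℝ)

def sCoeff : ℝ := (x + 3) * (2 * x - 3) ^ 2 * (x ^ 2 - 12 * x + 9)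

def tCoeff : ℝ := 2 * x ^ 5 - 48 * x ^ 4 + 69 * x ^ 3 - 189 * x ^ 2 + 243 * x - 81

noncomputable def linFactor : ℝ[X] := C x * X + C (1 - x)

noncomputable def quadFactor : ℝ[X] := C (x ^ 2 + x) * X - C (x ^ 2) * X ^ 2 - 1

noncomputable def antiderivNum : ℝ[X] :=
  C (54 - 270 * x + 504 * x ^ 2 - 432 * x ^ 3 + 162 * x ^ 4 - 18 * x ^ 5)
  + C (-81 + 405 * x - 756 * x ^ 2 + 810 * x ^ 3 - 831 * x ^ 4 + 751 * x ^ 5 - 332 * x ^ 6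
      + 34 * x ^ 7) * X
  + C (-702 * x ^ 3 + 2478 * x ^ 4 - 2974 * x ^ 5 + 1322 * x ^ 6 - 136 * x ^ 7 + 16 * x ^ 8
      - 4 * x ^ 9) * X ^ 2
  + C (864 * x ^ 3 - 3024 * x ^ 4 + 3600 * x ^ 5 - 1584 * x ^ 6 + 180 * x ^ 7 - 48 * x ^ 8
      + 12 * x ^ 9) * X ^ 3
  + C (-324 * x ^ 3 + 1134 * x ^ 4 - 1350 * x ^ 5 + 594 * x ^ 6 - 90 * x ^ 7 + 48 * x ^ 8
      - 12 * x ^ 9) * X ^ 4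
  + C (12 * x ^ 7 - 16 * x ^ 8 + 4 * x ^ 9) * X ^ 5

/-- `quadFactor x` is negative on `[0, 1]`; this is harmless because `Real.log` is `log |·|`. -/
noncomputable def antideriv (t : ℝ) : ℝ :=
  (antiderivNum x).eval t / ((linFactor x * quadFactor x).eval t) ^ 2
    + 8 * x ^ 2 * (x - 1) * log ((linFactor x).eval t)
    - 4 * x ^ 2 * (x - 1) * log ((quadFactor x).eval t)

theorem eval_linFactor_mul_quadFactor (t : ℝ) :
    (linFactor x * quadFactor x).eval t = x - 1 - x ^ 3 * (t * (1 - t) ^ 2) := by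
  simp only [linFactor, quadFactor, eval_mul, eval_add, eval_sub, eval_C, eval_X, eval_pow,
    eval_one]
  ring

/-- The equation `antideriv' = genFun (sCoeff x) (tCoeff x) z` multiplied by
`(linFactor x * quadFactor x)³`, using `1 - z = linFactor x * quadFactor x / (x - 1)`. -/
theorem antiderivNum_identity :
    derivative (antiderivNum x) * (linFactor x * quadFactor x)
        - 2 * antiderivNum x * derivative (linFactor x * quadFactor x)
        + C (8 * x ^ 2 * (x - 1)) * derivative (linFactor x) * linFactor x ^ 2 * quadFactor x ^ 3
        - C (4 * x ^ 2 * (x - 1)) * derivative (quadFactor x) * linFactor x ^ 3 * quadFactor x ^ 2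
      = C (6 * sCoeff x * (x - 1) ^ 3)
        + C ((3 * tCoeff x - 8 * sCoeff x) * (x - 1) ^ 2) * (linFactor x * quadFactor x)
        + C (2 * (sCoeff x - tCoeff x) * (x - 1)) * (linFactor x * quadFactor x) ^ 2 := by
  refine Polynomial.funext fun t => ?_
  simp only [sCoeff, tCoeff, antiderivNum, linFactor, quadFactor, derivative_add, derivative_sub,
    derivative_mul, derivative_C, derivative_X, derivative_X_pow, derivative_one, eval_add,
    eval_sub, eval_mul, eval_pow, eval_C, eval_X, eval_one, eval_zero, eval_ofNat]
  ring

variable {x}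

theorem hasDerivAt_antideriv {t : ℝ} (hx : x ≠ 1)
    (hz : x ^ 3 / (x - 1) * (t * (1 - t) ^ 2) ≠ 1) :
    HasDerivAt (antideriv x) (genFun (sCoeff x) (tCoeff x) (x ^ 3 / (x - 1) * (t * (1 - t) ^ 2)))
      t := by
  have hx' : x - 1 ≠ 0 := sub_ne_zero.2 hx
  have h1z : 1 - x ^ 3 / (x - 1) * (t * (1 - t) ^ 2)
      = (linFactor x * quadFactor x).eval t / (x - 1) := by
    rw [eval_linFactor_mul_quadFactor]
    field_simp
  have hD : (linFactor x * quadFactor x).eval t ≠ 0 := by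
    have h := sub_ne_zero.2 hz.symm
    rw [h1z] at h
    exact (div_ne_zero_iff.1 h).1
  have hL : (linFactor x).eval t ≠ 0 := left_ne_zero_of_mul (eval_mul (p := linFactor x) ▸ hD)
  have hM : (quadFactor x).eval t ≠ 0 := right_ne_zero_of_mul (eval_mul (p := linFactor x) ▸ hD)
  refine ((((antiderivNum x).hasDerivAt t).div
    (((linFactor x * quadFactor x).hasDerivAt t).fun_pow 2) (pow_ne_zero 2 hD)).add
    (((linFactor x).hasDerivAt t).log hL |>.const_mul _) |>.sub
    (((quadFactor x).hasDerivAt t).log hM |>.const_mul _)).congr_deriv ?_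
  have key := congrArg (eval t) (antiderivNum_identity x)
  simp only [genFun, h1z, eval_mul, eval_add, eval_sub, eval_pow, eval_C, derivative_mul,
    eval_ofNat, Nat.cast_ofNat, Nat.add_one_sub_one, pow_one] at key hL hM ⊢
  generalize (antiderivNum x).eval t = a at key ⊢
  generalize (derivative (antiderivNum x)).eval t = a' at key ⊢
  generalize (linFactor x).eval t = l at key hL ⊢
  generalize (derivative (linFactor x)).eval t = l' at key ⊢
  generalize (quadFactor x).eval t = m at key hM ⊢
  generalize (derivative (quadFactor x)).eval t = m' at key ⊢
  field_simp
  linear_combination key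

theorem antideriv_one_sub_antideriv_zero (hx : x < 1) :
    antideriv x 1 - antideriv x 0
      = 12 * x ^ 2 * (1 - x) * log (1 - x) - 27 * (1 - x) * (x ^ 2 - 6 * x + 3) := by
  have hx' : 1 - x ≠ 0 := by linarith
  have hL₁ : (linFactor x).eval 1 = 1 := by simp [linFactor]
  have hL₀ : (linFactor x).eval 0 = 1 - x := by simp [linFactor]
  have hM₁ : (quadFactor x).eval 1 = -(1 - x) := by simp [quadFactor]
  have hM₀ : (quadFactor x).eval 0 = -1 := by simp [quadFactor]
  have hA : (antiderivNum x).eval 1 - (antiderivNum x).eval 0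
      = -27 * (1 - x) ^ 3 * (x ^ 2 - 6 * x + 3) := by
    simp [antiderivNum]
    ring
  simp only [antideriv, eval_mul, hL₁, hL₀, hM₁, hM₀, log_neg_eq_log, log_one]
  field_simp
  linear_combination hA

end Antiderivative

theorem stmt_7 (x : ℝ)
    (hx1 : -3 < x)
    (hx2 : x < (3 / 2) * ((1 + Real.sqrt 2) ^ ((1 : ℝ) / 3) - (1 + Real.sqrt 2) ^ (-(1 : ℝ) / 3))) :
    ∑' k : ℕ,
        (((x + 3) * (2 * x - 3) ^ 2 * (x ^ 2 - 12 * x + 9)) * k +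
            (2 * x ^ 5 - 48 * x ^ 4 + 69 * x ^ 3 - 189 * x ^ 2 + 243 * x - 81)) *
          x ^ (3 * k) / ((x - 1) ^ k * (Nat.choose (3 * k) k : ℝ)) =
      12 * x ^ 2 * (1 - x) * Real.log (1 - x) - 27 * (1 - x) * (x ^ 2 - 6 * x + 3) := by
  have hcube := four_mul_cube_add_lt_of_lt hx2
  have hx : x < 1 := by nlinarith [sq_nonneg x]
  have hr := abs_cube_div_sub_one_lt hx1 hcube
  calc _ = ∑' k : ℕ, (sCoeff x * k + tCoeff x) * (x ^ 3 / (x - 1)) ^ k / (3 * k).choose k := by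
        refine tsum_congr fun k => ?_
        rw [div_pow, ← pow_mul, sCoeff, tCoeff]
        ring
    _ = ∫ t in (0 : ℝ)..1, genFun (sCoeff x) (tCoeff x) (x ^ 3 / (x - 1) * (t * (1 - t) ^ 2)) :=
        (hasSum_div_choose_three_mul _ _ hr).tsum_eq
    _ = antideriv x 1 - antideriv x 0 := by
        refine integral_eq_sub_of_hasDerivAt (fun t ht => hasDerivAt_antideriv hx.ne ?_)
          (intervalIntegrable_genFun _ _ hr)
        rw [Set.uIcc_of_le zero_le_one] at ht
        exact (abs_lt.1 (abs_mul_mul_one_sub_sq_lt_one hr ht)).2.ne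
    _ = _ := antideriv_one_sub_antideriv_zero hx
end

section
/- For every real x > 1/4, ∑_{k=0}^∞ 1/(x^{2k}·C(4k,2k)) = 16x²/(16x²−1) + 2x·( arccot(√(4x−1))/((4x−1)·√(4x−1)) − arccoth(√(4x+1))/((4x+1)·√(4x+1)) ). -/
/-!
Euler's Beta integral gives `1 / ((4k+1) C(4k,2k)) = ∫₀¹ (t(1-t))^(2k) dt`, so the `k`-th term is
`∫₀¹ (4k+1) u^(2k) dt` with `u = t(1-t)/x`, and `|u| ≤ 1/(4x) < 1` on `[0,1]`. Summing under the
integral (dominated convergence) gives the even part of `∑ (2n+1) u^n = (1+u)/(1-u)^2`, whose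
partial fractions in `1 ∓ u` have denominators `t² - t + x` (no real roots when `x > 1/4`, hence the
arctangent) and `x + t - t²` (real roots outside `[0,1]`, hence the logarithm).
-/

open Real MeasureTheory

theorem integral_mul_one_sub_pow (n : ℕ) :
    ∫ t in (0 : ℝ)..1, (t * (1 - t)) ^ n = 1 / ((2 * n + 1) * (2 * n).choose n) := by
  have hn : (0 : ℝ) < ((n : ℂ) + 1).re := by simp; positivity
  have hbeta := Complex.betaIntegral_eq_Gamma_mul_div _ _ hn hn
  rw [show (n : ℂ) + 1 + (n + 1) = ((2 * n + 1 : ℕ) : ℂ) + 1 by push_cast; ring,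
    Complex.Gamma_nat_eq_factorial, Complex.Gamma_nat_eq_factorial] at hbeta
  have hint : Complex.betaIntegral ((n : ℂ) + 1) ((n : ℂ) + 1)
      = ((∫ t in (0 : ℝ)..1, (t * (1 - t)) ^ n : ℝ) : ℂ) := by
    rw [Complex.betaIntegral, ← intervalIntegral.integral_ofReal]
    refine intervalIntegral.integral_congr fun t _ => ?_
    simp only [add_sub_cancel_right, Complex.cpow_natCast]
    push_cast [mul_pow]
    rfl
  have hfact : ((2 * n + 1).factorial : ℂ)
      = (2 * n + 1) * (2 * n).choose n * n.factorial * n.factorial := by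
    rw [Nat.factorial_succ, ← Nat.choose_mul_factorial_mul_factorial (by omega : n ≤ 2 * n),
      show 2 * n - n = n by omega]
    push_cast; ring
  have hfact_ne : (n.factorial : ℂ) ≠ 0 := Nat.cast_ne_zero.2 n.factorial_ne_zero
  have hchoose_ne : ((2 * n).choose n : ℂ) ≠ 0 :=
    Nat.cast_ne_zero.2 (Nat.choose_pos (by omega)).ne'
  apply Complex.ofReal_injective
  rw [← hint, hbeta, hfact]
  push_cast
  field_simp

theorem hasSum_four_mul_add_one_mul_pow_two_mul {u : ℝ} (hu : |u| < 1) :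
    HasSum (fun k : ℕ => (4 * k + 1) * u ^ (2 * k))
      ((1 / (1 - u) ^ 2 - 1 / (2 * (1 - u))) + (1 / (1 + u) ^ 2 - 1 / (2 * (1 + u)))) := by
  have hu2 : ‖u ^ 2‖ < 1 := by rw [norm_pow, Real.norm_eq_abs]; nlinarith [abs_nonneg u]
  have hsum := ((hasSum_coe_mul_geometric_of_norm_lt_one hu2).mul_left 4).add
    (hasSum_geometric_of_norm_lt_one hu2)
  have h1 : 1 - u ≠ 0 := fun h => by rw [sub_eq_zero] at h; simp [← h] at hu
  have h2 : 1 + u ≠ 0 := fun h => by rw [add_eq_zero_iff_eq_neg'] at h; simp [h] at hu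
  have h3 : 1 - u ^ 2 ≠ 0 := by
    rw [show 1 - u ^ 2 = (1 - u) * (1 + u) by ring]; exact mul_ne_zero h1 h2
  have hval : (1 / (1 - u) ^ 2 - 1 / (2 * (1 - u))) + (1 / (1 + u) ^ 2 - 1 / (2 * (1 + u)))
      = 4 * (u ^ 2 / (1 - u ^ 2) ^ 2) + (1 - u ^ 2)⁻¹ := by
    field_simp
    ring
  rw [hval]
  exact hsum.congr_fun fun k => by rw [pow_mul]; ring

theorem hasDerivAt_arctan_antideriv {x : ℝ} (hx : 1 / 4 < x) (t : ℝ) :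
    HasDerivAt
      (fun t => x ^ 2 * (2 * t - 1) / ((4 * x - 1) * (t ^ 2 - t + x)) +
        x / ((4 * x - 1) * √(4 * x - 1)) * arctan ((2 * t - 1) / √(4 * x - 1)))
      (x ^ 2 / (t ^ 2 - t + x) ^ 2 - x / (2 * (t ^ 2 - t + x))) t := by
  have hs : 0 < √(4 * x - 1) := sqrt_pos.2 (by linarith)
  have hs2 : √(4 * x - 1) ^ 2 = 4 * x - 1 := sq_sqrt (by linarith)
  have hq : 0 < t ^ 2 - t + x := by nlinarith [sq_nonneg (2 * t - 1)]
  have hlin : HasDerivAt (fun t : ℝ => 2 * t - 1) 2 t := by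
    simpa using ((hasDerivAt_id t).const_mul 2).sub_const 1
  have hquad : HasDerivAt (fun t : ℝ => t ^ 2 - t + x) (2 * t - 1) t := by
    simpa using ((hasDerivAt_pow 2 t).sub (hasDerivAt_id t)).add_const x
  have hrat := (hlin.const_mul (x ^ 2)).div (hquad.const_mul (4 * x - 1))
    (mul_pos (by linarith) hq).ne'
  have harctan := ((hlin.div_const (√(4 * x - 1))).arctan).const_mul
    (x / ((4 * x - 1) * √(4 * x - 1)))
  refine (hrat.add harctan).congr_deriv ?_
  have h1 : 1 + ((2 * t - 1) / √(4 * x - 1)) ^ 2 = 4 * (t ^ 2 - t + x) / √(4 * x - 1) ^ 2 := by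
    field_simp
    linear_combination hs2
  rw [h1]
  -- opaque names stop `field_simp` from renormalising denominators away from their `≠ 0` facts
  set q := t ^ 2 - t + x with hq_def
  set c := 4 * x - 1 with hc_def
  have hc : c ≠ 0 := by linarith
  have := hq.ne'
  have := hs.ne'
  field_simp
  rw [hq_def, hc_def]
  ring

theorem hasDerivAt_log_antideriv {x t : ℝ} (hx : -1 / 4 < x) (hp : x + t - t ^ 2 ≠ 0) :
    HasDerivAt
      (fun t => x ^ 2 * (2 * t - 1) / ((4 * x + 1) * (x + t - t ^ 2)) -
        x / (2 * (4 * x + 1) * √(4 * x + 1)) *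
          (log (t + (√(4 * x + 1) - 1) / 2) - log ((√(4 * x + 1) + 1) / 2 - t)))
      (x ^ 2 / (x + t - t ^ 2) ^ 2 - x / (2 * (x + t - t ^ 2))) t := by
  set r := √(4 * x + 1)
  have hr : 0 < r := sqrt_pos.2 (by linarith)
  have hr2 : r ^ 2 = 4 * x + 1 := sq_sqrt (by linarith)
  have hfactor : x + t - t ^ 2 = (t + (r - 1) / 2) * ((r + 1) / 2 - t) := by
    linear_combination (-1 / 4 : ℝ) * hr2
  obtain ⟨hp₁, hp₂⟩ := mul_ne_zero_iff.1 (hfactor ▸ hp)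
  have hlin : HasDerivAt (fun t : ℝ => 2 * t - 1) 2 t := by
    simpa using ((hasDerivAt_id t).const_mul 2).sub_const 1
  have hquad : HasDerivAt (fun t : ℝ => x + t - t ^ 2) (1 - 2 * t) t := by
    simpa [Pi.sub_def] using ((hasDerivAt_id t).const_add x).sub (hasDerivAt_pow 2 t)
  have hrat := (hlin.const_mul (x ^ 2)).div (hquad.const_mul (4 * x + 1))
    (mul_ne_zero (by linarith) hp)
  have hlog := (((hasDerivAt_id t).add_const ((r - 1) / 2)).log hp₁).sub
    (((hasDerivAt_id t).const_sub ((r + 1) / 2)).log hp₂)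
  refine (hrat.sub (hlog.const_mul (x / (2 * (4 * x + 1) * r)))).congr_deriv ?_
  simp only [id]
  rw [hfactor]
  set a := t + (r - 1) / 2 with ha
  set b := (r + 1) / 2 - t with hb
  set c := 4 * x + 1 with hc_def
  have hc : c ≠ 0 := by linarith
  have := hr.ne'
  field_simp
  rw [ha, hb, hc_def, show x = (r ^ 2 - 1) / 4 by linarith]
  ring

theorem integral_partial_fractions_eq {x : ℝ} (hx : 1 / 4 < x) :
    ∫ t in (0 : ℝ)..1, ((x ^ 2 / (t ^ 2 - t + x) ^ 2 - x / (2 * (t ^ 2 - t + x))) +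
        (x ^ 2 / (x + t - t ^ 2) ^ 2 - x / (2 * (x + t - t ^ 2)))) =
      16 * x ^ 2 / (16 * x ^ 2 - 1) +
        2 * x *
          (arctan (1 / √(4 * x - 1)) / ((4 * x - 1) * √(4 * x - 1)) -
            (1 / 2) * log ((√(4 * x + 1) + 1) / (√(4 * x + 1) - 1)) /
              ((4 * x + 1) * √(4 * x + 1))) := by
  have hq : ∀ t : ℝ, 0 < t ^ 2 - t + x := fun t => by nlinarith [sq_nonneg (2 * t - 1)]
  have hp : ∀ t ∈ Set.uIcc (0 : ℝ) 1, 0 < x + t - t ^ 2 := fun t ht => by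
    rw [Set.uIcc_of_le zero_le_one] at ht; nlinarith [ht.1, ht.2]
  have hderiv := fun t ht => (hasDerivAt_arctan_antideriv hx t).add
    (hasDerivAt_log_antideriv (by linarith) (hp t ht).ne')
  have hcont : ContinuousOn (fun t : ℝ => (x ^ 2 / (t ^ 2 - t + x) ^ 2 - x / (2 * (t ^ 2 - t + x))) +
        (x ^ 2 / (x + t - t ^ 2) ^ 2 - x / (2 * (x + t - t ^ 2)))) (Set.uIcc 0 1) := by
    fun_prop (disch := intro t ht; first
      | exact pow_ne_zero 2 (hq t).ne' | exact mul_ne_zero two_ne_zero (hq t).ne'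
      | exact pow_ne_zero 2 (hp t ht).ne' | exact mul_ne_zero two_ne_zero (hp t ht).ne')
  rw [intervalIntegral.integral_eq_sub_of_hasDerivAt hderiv hcont.intervalIntegrable]
  set s := √(4 * x - 1)
  set r := √(4 * x + 1)
  have hs : 0 < s := sqrt_pos.2 (by linarith)
  have hr : 1 < r := (lt_sqrt zero_le_one).2 (by linarith)
  have hlog : log ((r + 1) / (r - 1)) = log ((r + 1) / 2) - log ((r - 1) / 2) := by
    rw [← log_div (by positivity) (by linarith), div_div_div_cancel_right₀ two_ne_zero]
  norm_num
  rw [show 1 + (r - 1) / 2 = (r + 1) / 2 by ring, show (r + 1) / 2 - 1 = (r - 1) / 2 by ring,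
    neg_div _ (1 : ℝ), arctan_neg, one_div, hlog, show 16 * x ^ 2 - 1 = (4 * x - 1) * (4 * x + 1) by ring]
  set a := 4 * x - 1 with ha
  set b := 4 * x + 1 with hb
  have : a ≠ 0 := by linarith
  have : b ≠ 0 := by linarith
  have := hs.ne'
  have : r ≠ 0 := by linarith
  have : x ≠ 0 := by linarith
  field_simp
  rw [ha, hb]
  ring

theorem one_div_pow_mul_choose_eq_integral (x : ℝ) (k : ℕ) :
    1 / (x ^ (2 * k) * (4 * k).choose (2 * k)) =
      ∫ t in (0 : ℝ)..1, (4 * k + 1) * (t * (1 - t) / x) ^ (2 * k) := by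
  simp_rw [div_pow]
  rw [intervalIntegral.integral_const_mul, intervalIntegral.integral_div,
    integral_mul_one_sub_pow, show 2 * (2 * k) = 4 * k by ring]
  push_cast
  field_simp
  ring

theorem hasSum_one_div_pow_mul_choose {x : ℝ} (hx : 1 / 4 < x) :
    HasSum (fun k : ℕ => 1 / (x ^ (2 * k) * (4 * k).choose (2 * k)))
      (∫ t in (0 : ℝ)..1, ((x ^ 2 / (t ^ 2 - t + x) ^ 2 - x / (2 * (t ^ 2 - t + x))) +
        (x ^ 2 / (x + t - t ^ 2) ^ 2 - x / (2 * (x + t - t ^ 2))))) := by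
  have hx0 : 0 < x := by linarith
  have hbound : ∀ t ∈ Set.uIoc (0 : ℝ) 1, |t * (1 - t) / x| ≤ 1 / (4 * x) := fun t ht => by
    rw [Set.uIoc_of_le zero_le_one] at ht
    rw [abs_div, abs_of_nonneg (by nlinarith [ht.1, ht.2]), abs_of_pos hx0,
      div_le_div_iff₀ hx0 (by positivity)]
    nlinarith [sq_nonneg (2 * t - 1)]
  have hlt : 1 / (4 * x) < 1 := by rw [div_lt_one (by positivity)]; linarith
  have hlim : ∀ t ∈ Set.uIoc (0 : ℝ) 1,
      HasSum (fun k : ℕ => (4 * k + 1) * (t * (1 - t) / x) ^ (2 * k))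
        ((x ^ 2 / (t ^ 2 - t + x) ^ 2 - x / (2 * (t ^ 2 - t + x))) +
          (x ^ 2 / (x + t - t ^ 2) ^ 2 - x / (2 * (x + t - t ^ 2)))) := fun t ht => by
    have hsum := hasSum_four_mul_add_one_mul_pow_two_mul ((hbound t ht).trans_lt hlt)
    rw [show 1 - t * (1 - t) / x = (t ^ 2 - t + x) / x by field_simp; ring,
      show 1 + t * (1 - t) / x = (x + t - t ^ 2) / x by field_simp; ring] at hsum
    convert hsum using 1
    field_simp
  simp_rw [one_div_pow_mul_choose_eq_integral x]
  refine intervalIntegral.hasSum_integral_of_dominated_convergence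
    (fun k _ => (4 * k + 1) * (1 / (4 * x)) ^ (2 * k)) (fun k => ?_)
    (fun k => ae_of_all _ fun t ht => ?_)
    (ae_of_all _ fun _ _ => (hasSum_four_mul_add_one_mul_pow_two_mul
      (by rwa [abs_of_nonneg (by positivity)])).summable)
    intervalIntegrable_const (ae_of_all _ hlim)
  · exact (by fun_prop : Continuous _).aestronglyMeasurable
  · rw [norm_mul, norm_pow, Real.norm_of_nonneg (by positivity), Real.norm_eq_abs]
    gcongr
    exact hbound t ht

theorem stmt_10 (x : ℝ) (hx : 1 / 4 < x) :
    ∑' k : ℕ, 1 / (x ^ (2 * k) * (Nat.choose (4 * k) (2 * k) : ℝ)) =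
      16 * x ^ 2 / (16 * x ^ 2 - 1) +
        2 * x *
          (Real.arctan (1 / Real.sqrt (4 * x - 1)) / ((4 * x - 1) * Real.sqrt (4 * x - 1)) -
            (1 / 2) * Real.log ((Real.sqrt (4 * x + 1) + 1) / (Real.sqrt (4 * x + 1) - 1)) /
              ((4 * x + 1) * Real.sqrt (4 * x + 1))) := by
  rw [(hasSum_one_div_pow_mul_choose hx).tsum_eq, integral_partial_fractions_eq hx]
end
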